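/- arXiv:1808.09022 — 7 statements merged into one kernel-verified Lean document; each statement's English description precedes it below -/
import Mathlib

section
/- Let a, b, d be real numbers with d > 1, and let k : ℝ → ℝ be the piecewise-linear Chua characteristic k(φ) = bφ + ((a−b)/2)(|φ+1| − |φ−1|). Then the function S(c₁, c₂) = ∫_{−d}^{d} (k(φ) − c₁φ³ − c₂φ)² dφ attains its unique global minimum at c₁ = −35(a−b)(d²−1)²/(16d⁷) and c₂ = (a−b)(21 − 50d² + 45d⁴)/(16d⁵) + b. -/
/-! Write `k(φ) = bφ + (a - b) sat(φ)` with the clamp `sat φ = (|φ + 1| - |φ - 1|) / 2`. The error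
of the proposed cubic is `(a - b)` times the residual `ρ` of the fit `sat ≈ αφ³ + βφ`, and `α, β`
solve the normal equations: `ρ` is orthogonal to `φ` and `φ³` on `[-d, d]` (the moments of `sat`
are computed piecewise, which is where `d ≥ 1` enters). By Pythagoras,
`S(c₁, c₂) = S(C₁, C₂) + ∫ ((C₁ - c₁)φ³ + (C₂ - c₂)φ)²`, and the last integral is a positive
definite quadratic form in `(C₁ - c₁, C₂ - c₂)`. -/

open MeasureTheory intervalIntegral

noncomputable def chuaPL (a b φ : ℝ) : ℝ :=
  b * φ + (a - b) / 2 * (|φ + 1| - |φ - 1|)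

noncomputable def squareError (a b d c₁ c₂ : ℝ) : ℝ :=
  ∫ φ in (-d)..d, (chuaPL a b φ - (c₁ * φ ^ 3 + c₂ * φ)) ^ 2

noncomputable def saturation (φ : ℝ) : ℝ :=
  (|φ + 1| - |φ - 1|) / 2

@[fun_prop]
lemma continuous_saturation : Continuous saturation := by
  unfold saturation; fun_prop

lemma saturation_of_le_neg_one {φ : ℝ} (h : φ ≤ -1) : saturation φ = -1 := by
  rw [saturation, abs_of_nonpos (by linarith), abs_of_nonpos (by linarith)]; ring

lemma saturation_of_mem_Icc {φ : ℝ} (h : φ ∈ Set.Icc (-1) 1) : saturation φ = φ := by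
  rw [saturation, abs_of_nonneg (by linarith [h.1]), abs_of_nonpos (by linarith [h.2])]; ring

lemma saturation_of_one_le {φ : ℝ} (h : 1 ≤ φ) : saturation φ = 1 := by
  rw [saturation, abs_of_nonneg (by linarith), abs_of_nonneg (by linarith)]; ring

lemma integral_pow_of_even {n : ℕ} (hn : Even n) (d : ℝ) :
    ∫ x in (-d)..d, x ^ n = 2 * d ^ (n + 1) / (n + 1) := by
  rw [integral_pow, hn.add_one.neg_pow]; ring

lemma integral_saturation_mul_pow_of_odd {n : ℕ} (hn : Odd n) {d : ℝ} (hd : 1 ≤ d) :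
    ∫ x in (-d)..d, saturation x * x ^ n = 2 * (d ^ (n + 1) - 1) / (n + 1) + 2 / (n + 2) := by
  have hint : ∀ l r : ℝ, IntervalIntegrable (fun x => saturation x * x ^ n) volume l r :=
    fun l r => (Continuous.intervalIntegrable (by fun_prop)) l r
  rw [← integral_add_adjacent_intervals (hint (-d) (-1)) (hint (-1) d),
    ← integral_add_adjacent_intervals (hint (-1) 1) (hint 1 d)]
  have left : ∫ x in (-d)..(-1), saturation x * x ^ n = ∫ x in (-d)..(-1), -x ^ n :=
    integral_congr fun x hx => by
      rw [Set.uIcc_of_le (by linarith)] at hx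
      simp [saturation_of_le_neg_one hx.2]
  have middle : ∫ x in (-1)..1, saturation x * x ^ n = ∫ x in (-1)..1, x ^ (n + 1) :=
    integral_congr fun x hx => by
      rw [Set.uIcc_of_le (by norm_num)] at hx
      rw [saturation_of_mem_Icc hx, pow_succ']
  have right : ∫ x in (1 : ℝ)..d, saturation x * x ^ n = ∫ x in (1 : ℝ)..d, x ^ n :=
    integral_congr fun x hx => by
      rw [Set.uIcc_of_le hd] at hx
      simp [saturation_of_one_le hx.1]
  rw [left, middle, right, intervalIntegral.integral_neg, integral_pow, integral_pow, integral_pow,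
    hn.add_one.neg_pow, hn.add_one.neg_pow, hn.add_one.add_one.neg_pow]
  push_cast
  ring

noncomputable def satFitCubic (d : ℝ) : ℝ := -35 * (d ^ 2 - 1) ^ 2 / (16 * d ^ 7)

noncomputable def satFitLinear (d : ℝ) : ℝ := (21 - 50 * d ^ 2 + 45 * d ^ 4) / (16 * d ^ 5)

noncomputable def satResidual (d φ : ℝ) : ℝ :=
  saturation φ - (satFitCubic d * φ ^ 3 + satFitLinear d * φ)

@[fun_prop]
lemma continuous_satResidual (d : ℝ) : Continuous (satResidual d) := by
  unfold satResidual; fun_prop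

lemma integral_satResidual_mul_pow_of_odd {n : ℕ} (hn : Odd n) {d : ℝ} (hd : 1 ≤ d) :
    ∫ x in (-d)..d, satResidual d x * x ^ n =
      2 * (d ^ (n + 1) - 1) / (n + 1) + 2 / (n + 2)
        - satFitCubic d * (2 * d ^ (n + 4) / (n + 4))
        - satFitLinear d * (2 * d ^ (n + 2) / (n + 2)) := by
  have expand : ∀ x, satResidual d x * x ^ n =
      saturation x * x ^ n - satFitCubic d * x ^ (n + 3) - satFitLinear d * x ^ (n + 1) := by
    intro x; simp only [satResidual]; ring
  simp_rw [expand]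
  rw [integral_sub ((Continuous.intervalIntegrable (by fun_prop)) _ _)
      ((Continuous.intervalIntegrable (by fun_prop)) _ _),
    integral_sub ((Continuous.intervalIntegrable (by fun_prop)) _ _)
      ((Continuous.intervalIntegrable (by fun_prop)) _ _),
    intervalIntegral.integral_const_mul, intervalIntegral.integral_const_mul,
    integral_saturation_mul_pow_of_odd hn hd,
    integral_pow_of_even (hn.add_odd (by decide)),
    integral_pow_of_even hn.add_one]
  push_cast; ring

lemma integral_satResidual_mul_odd_cubic {d : ℝ} (hd : 1 ≤ d) (u v : ℝ) :
    ∫ x in (-d)..d, satResidual d x * (u * x ^ 3 + v * x) = 0 := by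
  have expand : ∀ x, satResidual d x * (u * x ^ 3 + v * x) =
      u * (satResidual d x * x ^ 3) + v * (satResidual d x * x ^ 1) := by
    intro x; ring
  simp_rw [expand]
  rw [integral_add ((Continuous.intervalIntegrable (by fun_prop)) _ _)
      ((Continuous.intervalIntegrable (by fun_prop)) _ _),
    intervalIntegral.integral_const_mul, intervalIntegral.integral_const_mul,
    integral_satResidual_mul_pow_of_odd (by decide) hd,
    integral_satResidual_mul_pow_of_odd odd_one hd, satFitCubic, satFitLinear]
  have : d ≠ 0 := (zero_lt_one.trans_le hd).ne'
  field_simp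
  ring

lemma integral_add_sq_of_integral_mul_eq_zero {f g : ℝ → ℝ} {a b : ℝ} (hf : Continuous f)
    (hg : Continuous g) (h : ∫ x in a..b, f x * g x = 0) :
    ∫ x in a..b, (f x + g x) ^ 2 = (∫ x in a..b, f x ^ 2) + ∫ x in a..b, g x ^ 2 := by
  have expand : ∀ x, (f x + g x) ^ 2 = (f x ^ 2 + 2 * (f x * g x)) + g x ^ 2 := fun x => by ring
  simp_rw [expand]
  rw [integral_add ((Continuous.intervalIntegrable (by fun_prop)) _ _)
      ((Continuous.intervalIntegrable (by fun_prop)) _ _),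
    integral_add ((Continuous.intervalIntegrable (by fun_prop)) _ _)
      ((Continuous.intervalIntegrable (by fun_prop)) _ _),
    intervalIntegral.integral_const_mul, h, mul_zero, add_zero]

lemma integral_odd_cubic_sq (d u v : ℝ) :
    ∫ x in (-d)..d, (u * x ^ 3 + v * x) ^ 2 =
      2 * d ^ 3 * (u ^ 2 * d ^ 4 / 7 + 2 * u * v * d ^ 2 / 5 + v ^ 2 / 3) := by
  have expand : ∀ x : ℝ,
      (u * x ^ 3 + v * x) ^ 2 = (u ^ 2 * x ^ 6 + 2 * u * v * x ^ 4) + v ^ 2 * x ^ 2 :=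
    fun x => by ring
  simp_rw [expand]
  rw [integral_add ((Continuous.intervalIntegrable (by fun_prop)) _ _)
      ((Continuous.intervalIntegrable (by fun_prop)) _ _),
    integral_add ((Continuous.intervalIntegrable (by fun_prop)) _ _)
      ((Continuous.intervalIntegrable (by fun_prop)) _ _),
    intervalIntegral.integral_const_mul, intervalIntegral.integral_const_mul,
    intervalIntegral.integral_const_mul, integral_pow_of_even (by decide),
    integral_pow_of_even (by decide), integral_pow_of_even (by decide)]
  push_cast; ring

lemma integral_odd_cubic_sq_pos {d : ℝ} (hd : 0 < d) {u v : ℝ} (huv : (u, v) ≠ 0) :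
    0 < ∫ x in (-d)..d, (u * x ^ 3 + v * x) ^ 2 := by
  rw [integral_odd_cubic_sq]
  have hnonzero : v ≠ 0 ∨ u * d ^ 2 ≠ 0 := by
    by_contra! h
    exact huv (Prod.ext (by simpa [hd.ne'] using h.2) h.1)
  -- `105 ×` the Gram form of `x³, x` in `w = u d²` and `v`; definite since `21² < 15 · 35`.
  have gram : 0 < 15 * (u * d ^ 2) ^ 2 + 42 * (u * d ^ 2) * v + 35 * v ^ 2 := by
    rcases hnonzero with hv | hw
    · nlinarith [sq_nonneg (5 * (u * d ^ 2) + 7 * v), sq_pos_of_ne_zero hv]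
    · nlinarith [sq_nonneg (5 * (u * d ^ 2) + 7 * v), sq_pos_of_ne_zero hw]
  have : 0 < 2 * d ^ 3 := by positivity
  nlinarith

lemma chuaPL_sub_cubic (a b d c₁ c₂ x : ℝ) :
    chuaPL a b x - (c₁ * x ^ 3 + c₂ * x) =
      (a - b) * satResidual d x + (((a - b) * satFitCubic d - c₁) * x ^ 3
        + ((a - b) * satFitLinear d + b - c₂) * x) := by
  simp only [chuaPL, satResidual, saturation]; ring

lemma squareError_eq_min_add (a b : ℝ) {d : ℝ} (hd : 1 ≤ d) (c₁ c₂ : ℝ) :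
    squareError a b d c₁ c₂ =
      squareError a b d ((a - b) * satFitCubic d) ((a - b) * satFitLinear d + b) +
        ∫ x in (-d)..d, (((a - b) * satFitCubic d - c₁) * x ^ 3
          + ((a - b) * satFitLinear d + b - c₂) * x) ^ 2 := by
  simp_rw [squareError, chuaPL_sub_cubic a b d, sub_self, zero_mul, add_zero]
  refine integral_add_sq_of_integral_mul_eq_zero (by fun_prop) (by fun_prop) ?_
  simp_rw [mul_assoc]
  rw [intervalIntegral.integral_const_mul, integral_satResidual_mul_odd_cubic hd, mul_zero]

/-- For `d > 1`, the square error `S` attains its unique global minimum at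
`c₁ = -35(a-b)(d²-1)²/(16 d⁷)` and `c₂ = (a-b)(21 - 50d² + 45d⁴)/(16 d⁵) + b`
(least squares approximation of the Chua characteristic by a cubic). -/
theorem squareError_unique_global_min (a b d : ℝ) (hd : d > 1) :
    ∀ c₁ c₂ : ℝ,
      (c₁, c₂) ≠ (-35 * (a - b) * (d ^ 2 - 1) ^ 2 / (16 * d ^ 7),
                  (a - b) * (21 - 50 * d ^ 2 + 45 * d ^ 4) / (16 * d ^ 5) + b) →
      squareError a b d (-35 * (a - b) * (d ^ 2 - 1) ^ 2 / (16 * d ^ 7))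
          ((a - b) * (21 - 50 * d ^ 2 + 45 * d ^ 4) / (16 * d ^ 5) + b)
        < squareError a b d c₁ c₂ := by
  intro c₁ c₂ hne
  have hC₁ : -35 * (a - b) * (d ^ 2 - 1) ^ 2 / (16 * d ^ 7) = (a - b) * satFitCubic d := by
    rw [satFitCubic]; ring
  have hC₂ :
      (a - b) * (21 - 50 * d ^ 2 + 45 * d ^ 4) / (16 * d ^ 5) = (a - b) * satFitLinear d := by
    rw [satFitLinear]; ring
  rw [hC₁, hC₂] at hne ⊢
  rw [squareError_eq_min_add a b hd.le c₁ c₂, lt_add_iff_pos_right]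
  refine integral_odd_cubic_sq_pos (by linarith) ?_
  rwa [Ne, Prod.mk_eq_zero, sub_eq_zero, sub_eq_zero, ← Prod.mk.injEq, eq_comm]
end

section
/- Let c₁ > 0, c₂ < 0 and β, γ be real parameters, and consider the third-order memristor system with f₁(x₁,x₂,y₁) = y₁ − x₂, f₂(x₁,x₂,y₁) = βx₁ + γx₂ and g₁(x₁,x₂,y₁) = −x₁ − (c₁y₁³ + c₂y₁). Then the set of pseudo singular points, i.e., the set of (x₁,x₂,y₁) ∈ ℝ³ satisfying g₁ = 0, ∂g₁/∂y₁ = 0 and (∂g₁/∂x₁)·f₁ + (∂g₁/∂x₂)·f₂ = 0, consists exactly of the two points (x₁, x₂, y₁) = (±(2c₂/3)·s, ∓s, ∓s), where s = √(−c₂/(3c₁)). -/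
/-- Slow vector field component `f₁(x₁,x₂,y₁) = y₁ - x₂` of the third-order memristor
canonical Chua circuit. -/
def memf₁ (x₁ x₂ y₁ : ℝ) : ℝ := y₁ - x₂

/-- Slow vector field component `f₂(x₁,x₂,y₁) = βx₁ + γx₂`. -/
def memf₂ (β γ x₁ x₂ y₁ : ℝ) : ℝ := β * x₁ + γ * x₂

/-- Fast component `g₁(x₁,x₂,y₁) = -x₁ - (c₁y₁³ + c₂y₁)`. -/
def memg₁ (c₁ c₂ x₁ x₂ y₁ : ℝ) : ℝ := -x₁ - (c₁ * y₁ ^ 3 + c₂ * y₁)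

/-! Along the fold `∂g₁/∂y₁ = 0` the cubic `c₁y₁³ + c₂y₁` equals `(2c₂/3)y₁`, and since
`∂g₁/∂x₁ = -1`, `∂g₁/∂x₂ = 0`, the remaining condition is `f₁ = 0`, i.e. `x₂ = y₁`. The fold
consists of `y₁ = ±√(-c₂/(3c₁))`. -/

lemma deriv_memg₁_fst (c₁ c₂ x₁ x₂ y₁ : ℝ) :
    deriv (fun t => memg₁ c₁ c₂ t x₂ y₁) x₁ = -1 := by
  simp [memg₁]

lemma deriv_memg₁_snd (c₁ c₂ x₁ x₂ y₁ : ℝ) :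
    deriv (fun t => memg₁ c₁ c₂ x₁ t y₁) x₂ = 0 := by
  simp [memg₁]

lemma deriv_memg₁_thd (c₁ c₂ x₁ x₂ y₁ : ℝ) :
    deriv (fun t => memg₁ c₁ c₂ x₁ x₂ t) y₁ = -(3 * c₁ * y₁ ^ 2 + c₂) := by
  have h : HasDerivAt (fun t => c₁ * t ^ 3 + c₂ * t) (3 * c₁ * y₁ ^ 2 + c₂) y₁ :=
    (((hasDerivAt_pow 3 y₁).const_mul c₁).fun_add ((hasDerivAt_id' y₁).const_mul c₂)).congr_deriv
      (by norm_num; ring)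
  simp only [memg₁, deriv_const_sub, h.deriv]

lemma three_mul_sq_add_eq_zero_iff {a b z : ℝ} (ha : 0 < a) (hb : b ≤ 0) :
    3 * a * z ^ 2 + b = 0 ↔ z = √(-b / (3 * a)) ∨ z = -√(-b / (3 * a)) := by
  have hsq : √(-b / (3 * a)) ^ 2 = -b / (3 * a) :=
    Real.sq_sqrt (div_nonneg (by linarith) (by linarith))
  rw [← sq_eq_sq_iff_eq_or_eq_neg, hsq, eq_div_iff (by positivity)]
  constructor <;> intro h <;> linarith

lemma cubic_eq_of_three_mul_sq_add_eq_zero {a b z : ℝ} (h : 3 * a * z ^ 2 + b = 0) :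
    a * z ^ 3 + b * z = 2 * b / 3 * z := by
  linear_combination z / 3 * h

/-- For `c₁ > 0`, `c₂ < 0`, the set of pseudo singular points of the
third-order memristor system, i.e. the solutions of `g₁ = 0`, `∂g₁/∂y₁ = 0` and
`(∂g₁/∂x₁)f₁ + (∂g₁/∂x₂)f₂ = 0`, consists exactly of the two points
`(±(2c₂/3)s, ∓s, ∓s)` with `s = √(-c₂/(3c₁))`. -/
theorem pseudo_singular_points_third_order (c₁ c₂ β γ : ℝ) (hc₁ : c₁ > 0) (hc₂ : c₂ < 0) :
    {p : ℝ × ℝ × ℝ |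
        memg₁ c₁ c₂ p.1 p.2.1 p.2.2 = 0 ∧
        deriv (fun y₁ => memg₁ c₁ c₂ p.1 p.2.1 y₁) p.2.2 = 0 ∧
        deriv (fun x₁ => memg₁ c₁ c₂ x₁ p.2.1 p.2.2) p.1 * memf₁ p.1 p.2.1 p.2.2
          + deriv (fun x₂ => memg₁ c₁ c₂ p.1 x₂ p.2.2) p.2.1 * memf₂ β γ p.1 p.2.1 p.2.2
          = 0}
    = {(2 * c₂ / 3 * Real.sqrt (-c₂ / (3 * c₁)),
        -Real.sqrt (-c₂ / (3 * c₁)), -Real.sqrt (-c₂ / (3 * c₁))),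
       (-(2 * c₂ / 3 * Real.sqrt (-c₂ / (3 * c₁))),
        Real.sqrt (-c₂ / (3 * c₁)), Real.sqrt (-c₂ / (3 * c₁)))} := by
  set s := √(-c₂ / (3 * c₁))
  have hs_fold : 3 * c₁ * s ^ 2 + c₂ = 0 :=
    (three_mul_sq_add_eq_zero_iff hc₁ hc₂.le).2 (Or.inl rfl)
  have hs_cubic := cubic_eq_of_three_mul_sq_add_eq_zero hs_fold
  ext ⟨x₁, x₂, y₁⟩
  simp only [Set.mem_ofPred_eq, Set.mem_insert_iff, Set.mem_singleton_iff, Prod.mk.injEq,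
    deriv_memg₁_fst, deriv_memg₁_snd, deriv_memg₁_thd, neg_eq_zero]
  simp only [memg₁, memf₁]
  constructor
  · rintro ⟨hg, hfold, hf⟩
    have hcubic := cubic_eq_of_three_mul_sq_add_eq_zero hfold
    have hx₂ : x₂ = y₁ := by linarith
    rcases (three_mul_sq_add_eq_zero_iff hc₁ hc₂.le).1 hfold with rfl | rfl
    · right; exact ⟨by linarith, hx₂, rfl⟩
    · left; exact ⟨by linarith, hx₂, rfl⟩
  · rintro (⟨rfl, rfl, rfl⟩ | ⟨rfl, rfl, rfl⟩)
    · exact ⟨by linear_combination hs_cubic, by linear_combination hs_fold, by ring⟩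
    · exact ⟨by linear_combination -hs_cubic, hs_fold, by ring⟩
end

section
/- Let β, γ, c₂ be real numbers with c₂ < 0, and let M be the 3×3 real matrix with rows (0,0,0), (0, 0, −2γc₂ + (4/3)βc₂²), (0, 1, −1). Then the characteristic polynomial of M equals λ(λ² + λ + q) with q = (2/3)c₂(3γ − 2βc₂), and M has two nonzero real eigenvalues of opposite sign (i.e., the pseudo singular point is of saddle type) if and only if γ > 2βc₂/3. -/
open Matrix

/-!
The matrix is block diagonal with a zero block and the companion matrix of `t² + t + q`, so its
characteristic polynomial is `t (t² + t + q)`. A factorization `t (t - l₁)(t - l₂)` forces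
`l₁ l₂ = q` (compare the values at `t = ±1`), and conversely `q < 0` makes the discriminant
`1 - 4q` positive, so the quadratic splits over `ℝ` with root product `q`. Finally, since `c₂ < 0`,
`q = (2/3) c₂ (3γ - 2βc₂)` is negative exactly when `γ > 2βc₂/3`.
-/

theorem det_smul_one_sub_zero_companion {R : Type*} [CommRing R] (a b t : R) :
    det (t • (1 : Matrix (Fin 3) (Fin 3) R) - !![0, 0, 0; 0, 0, a; 0, 1, b])
      = t * (t ^ 2 - b * t - a) := by
  simp only [det_fin_three, Matrix.sub_apply, Matrix.smul_apply, smul_eq_mul, of_apply, one_apply,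
    cons_val', cons_val_zero, cons_val_one, cons_val, cons_val_fin_one, Fin.reduceEq, ↓reduceIte]
  ring

theorem mul_eq_of_forall_mul_quadratic_eq {R : Type*} [CommRing R] [IsDomain R]
    [Invertible (2 : R)] {p q l₁ l₂ : R}
    (h : ∀ t, t * (t ^ 2 + p * t + q) = t * (t - l₁) * (t - l₂)) : l₁ * l₂ = q := by
  have h₁ := h 1
  have h₂ := h (-1)
  have : (2 : R) * (l₁ * l₂) = 2 * q := by linear_combination h₂ - h₁
  exact mul_left_cancel₀ (Invertible.ne_zero 2) this

theorem exists_quadratic_eq_mul_of_discrim_nonneg {p q : ℝ} (h : 0 ≤ p ^ 2 - 4 * q) :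
    ∃ l₁ l₂ : ℝ, l₁ * l₂ = q ∧ ∀ t, t ^ 2 + p * t + q = (t - l₁) * (t - l₂) := by
  have hs := Real.sq_sqrt h
  refine ⟨(-p + √(p ^ 2 - 4 * q)) / 2, (-p - √(p ^ 2 - 4 * q)) / 2, ?_, fun t => ?_⟩
  · linear_combination (-1 / 4 : ℝ) * hs
  · linear_combination (1 / 4 : ℝ) * hs

theorem exists_mul_neg_cubic_factorization_iff (p q : ℝ) :
    (∃ l₁ l₂ : ℝ, l₁ * l₂ < 0 ∧ ∀ t, t * (t ^ 2 + p * t + q) = t * (t - l₁) * (t - l₂))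
      ↔ q < 0 := by
  constructor
  · rintro ⟨l₁, l₂, hneg, h⟩
    exact mul_eq_of_forall_mul_quadratic_eq h ▸ hneg
  · intro hq
    obtain ⟨l₁, l₂, hprod, hfac⟩ :=
      exists_quadratic_eq_mul_of_discrim_nonneg (p := p) (q := q) (by nlinarith [sq_nonneg p])
    exact ⟨l₁, l₂, hprod ▸ hq, fun t => by rw [hfac, mul_assoc]⟩

/-- For the Jacobian `M` of the normalized slow dynamics of the
third-order memristor Chua circuit at its pseudo singular points (rows
`(0,0,0)`, `(0,0,-2γc₂ + (4/3)βc₂²)`, `(0,1,-1)`), the characteristic polynomial is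
`λ(λ² + λ + q)` with `q = (2/3)c₂(3γ - 2βc₂)`, and `M` has two nonzero real eigenvalues
of opposite sign (saddle type) if and only if `γ > 2βc₂/3`. -/
theorem third_order_pseudo_singular_saddle (β γ c₂ : ℝ) (hc₂ : c₂ < 0)
    (M : Matrix (Fin 3) (Fin 3) ℝ)
    (hM : M = !![0, 0, 0;
                 0, 0, -2 * γ * c₂ + 4 / 3 * β * c₂ ^ 2;
                 0, 1, -1]) :
    (∀ t : ℝ, Matrix.det (t • (1 : Matrix (Fin 3) (Fin 3) ℝ) - M)
        = t * (t ^ 2 + t + 2 / 3 * c₂ * (3 * γ - 2 * β * c₂)))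
    ∧ ((∃ l₁ l₂ : ℝ, l₁ * l₂ < 0 ∧
        ∀ t : ℝ, Matrix.det (t • (1 : Matrix (Fin 3) (Fin 3) ℝ) - M)
          = t * (t - l₁) * (t - l₂))
      ↔ γ > 2 * β * c₂ / 3) := by
  have hdet (t : ℝ) : det (t • (1 : Matrix (Fin 3) (Fin 3) ℝ) - M)
      = t * (t ^ 2 + 1 * t + 2 / 3 * c₂ * (3 * γ - 2 * β * c₂)) := by
    rw [hM, det_smul_one_sub_zero_companion]
    ring
  have hsign : 2 / 3 * c₂ * (3 * γ - 2 * β * c₂) < 0 ↔ γ > 2 * β * c₂ / 3 := by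
    rw [← smul_eq_mul, smul_neg_iff_of_neg_left (by linarith)]
    constructor <;> intro h <;> linarith
  refine ⟨fun t => by rw [hdet, one_mul], ?_⟩
  simp_rw [hdet, ← hsign]
  exact exists_mul_neg_cubic_factorization_iff 1 _
end

section
/- Let β₁, β₂, c₁, α₂, c₂, x₂, x̃₁, x̃₃, ỹ₁ be real numbers with x̃₁ = c₁ỹ₁³ + c₂ỹ₁, and let M be the 4×4 real matrix with rows (0,0,0,0), (0,0,0, 6β₂c₁x̃₃ỹ₁), (0,0,0, −6c₁(α₂x̃₃ + x₂ + x̃₁)ỹ₁), (−β₁, 0, β₁, −β₁). Then the characteristic polynomial of M equals λ²(λ² + β₁λ + q) with q = 6β₁c₁(α₂x̃₃ + x₂ + x̃₁)ỹ₁; in particular, M has two nonzero real eigenvalues of opposite sign (saddle type) if and only if q < 0. -/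
open Matrix

/-! The matrix has rank two, so its characteristic polynomial is `λ²` times a monic
quadratic `λ² + β₁λ + q`. By Vieta, `q` is the product of the two remaining eigenvalues,
and a real monic quadratic with negative constant term has positive discriminant. -/

theorem det_smul_one_sub_rank_two_jacobian {R : Type*} [CommRing R] (a b β t : R) :
    det (t • (1 : Matrix (Fin 4) (Fin 4) R) - !![0, 0, 0, 0;
                                                  0, 0, 0, a;
                                                  0, 0, 0, b;
                                                  -β, 0, β, -β])
      = t ^ 2 * (t ^ 2 + β * t - β * b) := by
  have hsub : t • (1 : Matrix (Fin 4) (Fin 4) R) - !![0, 0, 0, 0; 0, 0, 0, a; 0, 0, 0, b;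
      -β, 0, β, -β] = !![t, 0, 0, 0; 0, t, 0, -a; 0, 0, t, -b; β, 0, -β, t + β] := by
    ext i j
    fin_cases i <;> fin_cases j <;> simp
  rw [hsub]
  simp [det_succ_row_zero, Fin.sum_univ_succ, Fin.succAbove]
  ring

theorem mul_eq_of_forall_sq_mul_quadratic_eq {p q l₁ l₂ : ℝ}
    (h : ∀ t : ℝ, t ^ 2 * (t ^ 2 + p * t + q) = t ^ 2 * (t - l₁) * (t - l₂)) :
    l₁ * l₂ = q := by
  linear_combination -(h (-1) + h 1) / 2

theorem exists_factorization_of_quadratic_of_neg (p : ℝ) {q : ℝ} (hq : q < 0) :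
    ∃ l₁ l₂ : ℝ, l₁ * l₂ = q ∧ ∀ t : ℝ, t ^ 2 + p * t + q = (t - l₁) * (t - l₂) := by
  have hdisc : 0 ≤ p ^ 2 - 4 * q := by nlinarith [sq_nonneg p]
  have hs := Real.sq_sqrt hdisc
  refine ⟨(-p + √(p ^ 2 - 4 * q)) / 2, (-p - √(p ^ 2 - 4 * q)) / 2, ?_, fun t => ?_⟩
  · linear_combination -hs / 4
  · linear_combination hs / 4

theorem exists_opposite_sign_roots_iff (p q : ℝ) :
    (∃ l₁ l₂ : ℝ, l₁ * l₂ < 0 ∧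
        ∀ t : ℝ, t ^ 2 * (t ^ 2 + p * t + q) = t ^ 2 * (t - l₁) * (t - l₂))
      ↔ q < 0 := by
  constructor
  · rintro ⟨l₁, l₂, hneg, h⟩
    exact mul_eq_of_forall_sq_mul_quadratic_eq h ▸ hneg
  · intro hq
    obtain ⟨l₁, l₂, hprod, hfac⟩ := exists_factorization_of_quadratic_of_neg p hq
    exact ⟨l₁, l₂, hprod ▸ hq, fun t => by rw [hfac, mul_assoc]⟩

theorem fourth_order_pseudo_singular_saddle_general
    (β₁ β₂ c₁ α₂ x₂ xt₁ xt₃ yt₁ : ℝ)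
    (M : Matrix (Fin 4) (Fin 4) ℝ)
    (hM : M = !![0, 0, 0, 0;
                 0, 0, 0, 6 * β₂ * c₁ * xt₃ * yt₁;
                 0, 0, 0, -(6 * c₁ * (α₂ * xt₃ + x₂ + xt₁) * yt₁);
                 -β₁, 0, β₁, -β₁]) :
    (∀ t : ℝ, Matrix.det (t • (1 : Matrix (Fin 4) (Fin 4) ℝ) - M)
        = t ^ 2 * (t ^ 2 + β₁ * t + 6 * β₁ * c₁ * (α₂ * xt₃ + x₂ + xt₁) * yt₁))
    ∧ ((∃ l₁ l₂ : ℝ, l₁ * l₂ < 0 ∧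
          ∀ t : ℝ, Matrix.det (t • (1 : Matrix (Fin 4) (Fin 4) ℝ) - M)
            = t ^ 2 * (t - l₁) * (t - l₂))
        ↔ 6 * β₁ * c₁ * (α₂ * xt₃ + x₂ + xt₁) * yt₁ < 0) := by
  have hdet : ∀ t : ℝ, det (t • (1 : Matrix (Fin 4) (Fin 4) ℝ) - M)
      = t ^ 2 * (t ^ 2 + β₁ * t + 6 * β₁ * c₁ * (α₂ * xt₃ + x₂ + xt₁) * yt₁) := fun t => by
    rw [hM, det_smul_one_sub_rank_two_jacobian]
    ring
  simp only [hdet]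
  exact ⟨fun _ => trivial, exists_opposite_sign_roots_iff _ _⟩

/-- For the Jacobian `M` of the normalized slow dynamics of the
fourth-order memristor circuit at a point `(x̃₁, x₂, x̃₃, ỹ₁)` of its pseudo singular
manifold (with `x̃₁ = c₁ỹ₁³ + c₂ỹ₁`), the characteristic polynomial equals
`λ²(λ² + β₁λ + q)` with `q = 6β₁c₁(α₂x̃₃ + x₂ + x̃₁)ỹ₁`, and `M` has two nonzero real
eigenvalues of opposite sign (saddle type) if and only if `q < 0`. -/
theorem fourth_order_pseudo_singular_saddle
    (β₁ β₂ c₁ α₂ c₂ x₂ xt₁ xt₃ yt₁ : ℝ)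
    (hx : xt₁ = c₁ * yt₁ ^ 3 + c₂ * yt₁)
    (M : Matrix (Fin 4) (Fin 4) ℝ)
    (hM : M = !![0, 0, 0, 0;
                 0, 0, 0, 6 * β₂ * c₁ * xt₃ * yt₁;
                 0, 0, 0, -(6 * c₁ * (α₂ * xt₃ + x₂ + xt₁) * yt₁);
                 -β₁, 0, β₁, -β₁]) :
    (∀ t : ℝ, Matrix.det (t • (1 : Matrix (Fin 4) (Fin 4) ℝ) - M)
        = t ^ 2 * (t ^ 2 + β₁ * t + 6 * β₁ * c₁ * (α₂ * xt₃ + x₂ + xt₁) * yt₁))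
    ∧ ((∃ l₁ l₂ : ℝ, l₁ * l₂ < 0 ∧
          ∀ t : ℝ, Matrix.det (t • (1 : Matrix (Fin 4) (Fin 4) ℝ) - M)
            = t ^ 2 * (t - l₁) * (t - l₂))
        ↔ 6 * β₁ * c₁ * (α₂ * xt₃ + x₂ + xt₁) * yt₁ < 0) :=
  fourth_order_pseudo_singular_saddle_general β₁ β₂ c₁ α₂ x₂ xt₁ xt₃ yt₁ M hM
end

section
/- Let β₁ > 0, c₁ > 0 and c₂ be a real number with −3/2 < c₂ < 0, set s = √(−c₂/(3c₁)), and consider the positive-branch pseudo singular point with x₂ = 0, i.e., x̃₁ = (2c₂/3)s, x̃₃ = (2c₂/3 + 1)s, ỹ₁ = s. Then q = 6β₁c₁(α₂x̃₃ + x̃₁)ỹ₁ < 0 (equivalently, the pseudo singular point is of saddle type) if and only if α₂ < −2c₂/(3 + 2c₂). -/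
/-!
With `s > 0` (as `c₂ < 0`), the quantity `q` factors as `2β₁c₁s² · ((3 + 2c₂)α₂ + 2c₂)`.
The prefactor is positive, and so is `3 + 2c₂` (as `c₂ > -3/2`), so `q < 0` is a linear
inequality in `α₂` whose threshold is the saddle-node value `-2c₂/(3 + 2c₂)`.
-/

section LinearSign

variable {K : Type*} [Field K] [LinearOrder K] [IsStrictOrderedRing K]

theorem mul_neg_iff_of_pos_left {a b : K} (ha : 0 < a) : a * b < 0 ↔ b < 0 := by
  simpa using mul_lt_mul_iff_right₀ (b := b) (c := 0) ha

theorem mul_add_neg_iff_lt_neg_div {a b x : K} (ha : 0 < a) : x * a + b < 0 ↔ x < -b / a := by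
  rw [lt_div_iff₀ ha]
  constructor <;> intro h <;> linarith

end LinearSign

theorem sqrt_neg_div_pos {c₁ c₂ : ℝ} (hc₁ : 0 < c₁) (hc₂ : c₂ < 0) :
    0 < Real.sqrt (-c₂ / (3 * c₁)) :=
  Real.sqrt_pos.mpr (div_pos (neg_pos.mpr hc₂) (by positivity))

/-- For `β₁ > 0`, `c₁ > 0`, `-3/2 < c₂ < 0`, `s = √(-c₂/(3c₁))`, on the
positive-branch pseudo singular point with `x₂ = 0` (i.e. `x̃₁ = (2c₂/3)s`,
`x̃₃ = (2c₂/3 + 1)s`, `ỹ₁ = s`): `q = 6β₁c₁(α₂x̃₃ + x̃₁)ỹ₁ < 0` (saddle type) if and only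
if `α₂ < -2c₂/(3 + 2c₂)`. -/
theorem fourth_order_saddle_alpha_condition
    (β₁ c₁ c₂ : ℝ) (hβ₁ : β₁ > 0) (hc₁ : c₁ > 0)
    (hc₂ : -3 / 2 < c₂) (hc₂' : c₂ < 0)
    (s xt₁ xt₃ yt₁ : ℝ)
    (hs : s = Real.sqrt (-c₂ / (3 * c₁)))
    (h1 : xt₁ = (2 * c₂ / 3) * s)
    (h3 : xt₃ = (2 * c₂ / 3 + 1) * s)
    (hy : yt₁ = s) :
    ∀ α₂ : ℝ,
      6 * β₁ * c₁ * (α₂ * xt₃ + xt₁) * yt₁ < 0 ↔ α₂ < -2 * c₂ / (3 + 2 * c₂) := by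
  intro α₂
  rw [h1, h3, hy]
  have hs_pos : 0 < s := hs ▸ sqrt_neg_div_pos hc₁ hc₂'
  have hfactor : 6 * β₁ * c₁ * (α₂ * ((2 * c₂ / 3 + 1) * s) + 2 * c₂ / 3 * s) * s
      = (2 * β₁ * c₁ * s ^ 2) * (α₂ * (3 + 2 * c₂) + 2 * c₂) := by ring
  rw [hfactor, mul_neg_iff_of_pos_left (by positivity),
    mul_add_neg_iff_lt_neg_div (by linarith), neg_mul]
end

section
/- Let λ₁, a, b be real numbers and consider the monic real cubic polynomial with roots λ₁, a + ib, a − ib, written as a₃λ³ + a₂λ² + a₁λ + a₀ with a₃ = 1. Then the second Routh–Hurwitz determinant satisfies D₂ = a₁a₂ − a₀a₃ = −2a((λ₁ + a)² + b²). In particular, if b ≠ 0, then D₂ = 0 if and only if a = 0, i.e., D₂ vanishes exactly when the real part of the complex-conjugate pair of roots vanishes. -/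
/-! Expanding `(t - λ₁)((t - a)² + b²)` and comparing coefficients gives
`a₂ = -(λ₁ + 2a)`, `a₁ = 2aλ₁ + a² + b²`, `a₀ = -λ₁(a² + b²)`, and then
`a₁a₂ - a₀ = -2a((λ₁ + a)² + b²)` is a ring identity. For `b ≠ 0` the second factor is
positive, so `D₂` vanishes exactly when `a` does. -/

theorem coeffs_eq_of_forall_cubic_eq {K : Type*} [Field K] [CharZero K] {p q r p' q' r' : K}
    (h : ∀ t : K, t ^ 3 + p * t ^ 2 + q * t + r = t ^ 3 + p' * t ^ 2 + q' * t + r') :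
    p = p' ∧ q = q' ∧ r = r' := by
  have h₀ := h 0
  have h₁ := h 1
  have hneg₁ := h (-1)
  refine ⟨?_, ?_, ?_⟩
  · linear_combination (h₁ + hneg₁) / 2 - h₀
  · linear_combination (h₁ - hneg₁) / 2
  · linear_combination h₀

theorem sub_mul_sq_add_sq_eq {R : Type*} [CommRing R] (l a b t : R) :
    (t - l) * ((t - a) ^ 2 + b ^ 2)
      = t ^ 3 + -(l + 2 * a) * t ^ 2 + (2 * a * l + a ^ 2 + b ^ 2) * t + -l * (a ^ 2 + b ^ 2) := by
  ring

theorem neg_two_mul_mul_sq_add_sq_eq_zero_iff {K : Type*} [Field K] [LinearOrder K] [IsStrictOrderedRing K]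
    {a b c : K} (hb : b ≠ 0) : -2 * a * (c ^ 2 + b ^ 2) = 0 ↔ a = 0 := by
  have hpos : 0 < c ^ 2 + b ^ 2 := by positivity
  simp [hpos.ne']

/-- For the monic real cubic with roots `λ₁`, `a + ib`, `a - ib`
(written `λ³ + a₂λ² + a₁λ + a₀`, i.e. `a₃ = 1`), the second Routh–Hurwitz determinant
satisfies `D₂ = a₁a₂ - a₀a₃ = -2a((λ₁ + a)² + b²)`; in particular, if `b ≠ 0` then
`D₂ = 0` iff `a = 0`. -/
theorem routh_hurwitz_cubic (l₁ a b a₂ a₁ a₀ : ℝ)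
    (h : ∀ t : ℝ, t ^ 3 + a₂ * t ^ 2 + a₁ * t + a₀
        = (t - l₁) * ((t - a) ^ 2 + b ^ 2)) :
    a₁ * a₂ - a₀ * 1 = -2 * a * ((l₁ + a) ^ 2 + b ^ 2)
    ∧ (b ≠ 0 → (a₁ * a₂ - a₀ * 1 = 0 ↔ a = 0)) := by
  obtain ⟨rfl, rfl, rfl⟩ :=
    coeffs_eq_of_forall_cubic_eq fun t => (h t).trans (sub_mul_sq_add_sq_eq l₁ a b t)
  have hD₂ : (2 * a * l₁ + a ^ 2 + b ^ 2) * -(l₁ + 2 * a) - -l₁ * (a ^ 2 + b ^ 2) * 1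
      = -2 * a * ((l₁ + a) ^ 2 + b ^ 2) := by
    ring
  exact ⟨hD₂, fun hb => hD₂ ▸ neg_two_mul_mul_sq_add_sq_eq_zero_iff hb⟩
end

section
/- Let λ₁, λ₂, a, b be real numbers and consider the monic real quartic polynomial with roots λ₁, λ₂, a + ib, a − ib, written as a₄λ⁴ + a₃λ³ + a₂λ² + a₁λ + a₀ with a₄ = 1. Then the third Routh–Hurwitz determinant satisfies D₃ = a₁a₂a₃ − a₀a₃² − a₁²a₄ = 2a((λ₁ + a)² + b²)(λ₁ + λ₂)((λ₂ + a)² + b²). In particular, if b ≠ 0 and λ₁ + λ₂ ≠ 0, then D₃ = 0 if and only if a = 0. -/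
/-! Comparing coefficients expresses `a₀, …, a₃` through the roots (Vieta), after which `D₃`
factors by a polynomial identity. For `b ≠ 0` the factors `(lᵢ + a)² + b²` are positive, so the
only factors that can vanish are `a` and `l₁ + l₂`. -/

section CoefficientComparison

variable {K : Type*} [Field K] [CharZero K]

theorem cubic_coeffs_eq_zero_of_forall_eval_eq_zero {c₃ c₂ c₁ c₀ : K}
    (h : ∀ t : K, c₃ * t ^ 3 + c₂ * t ^ 2 + c₁ * t + c₀ = 0) :
    c₃ = 0 ∧ c₂ = 0 ∧ c₁ = 0 ∧ c₀ = 0 := by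
  have h₀ := h 0
  have h₁ := h 1
  have hm₁ := h (-1)
  have h₂ := h 2
  norm_num at h₀ h₁ hm₁ h₂
  have hc₀ : c₀ = 0 := h₀
  have hc₂ : c₂ = 0 := by linear_combination (h₁ + hm₁) / 2 - hc₀
  have hc₃ : c₃ = 0 := by linear_combination (h₂ - 2 * h₁ - 2 * hc₂ + hc₀) / 6
  have hc₁ : c₁ = 0 := by linear_combination h₁ - hc₃ - hc₂ - hc₀
  exact ⟨hc₃, hc₂, hc₁, hc₀⟩

theorem quartic_coeffs_of_roots {l₁ l₂ a b a₃ a₂ a₁ a₀ : K}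
    (h : ∀ t : K, t ^ 4 + a₃ * t ^ 3 + a₂ * t ^ 2 + a₁ * t + a₀
        = (t - l₁) * (t - l₂) * ((t - a) ^ 2 + b ^ 2)) :
    a₃ = -(l₁ + l₂) - 2 * a ∧
    a₂ = l₁ * l₂ + 2 * a * (l₁ + l₂) + a ^ 2 + b ^ 2 ∧
    a₁ = -(l₁ + l₂) * (a ^ 2 + b ^ 2) - 2 * a * l₁ * l₂ ∧
    a₀ = l₁ * l₂ * (a ^ 2 + b ^ 2) := by
  obtain ⟨h₃, h₂, h₁, h₀⟩ := cubic_coeffs_eq_zero_of_forall_eval_eq_zero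
    (c₃ := a₃ + (l₁ + l₂) + 2 * a)
    (c₂ := a₂ - (l₁ * l₂ + 2 * a * (l₁ + l₂) + a ^ 2 + b ^ 2))
    (c₁ := a₁ + (l₁ + l₂) * (a ^ 2 + b ^ 2) + 2 * a * l₁ * l₂)
    (c₀ := a₀ - l₁ * l₂ * (a ^ 2 + b ^ 2))
    fun t => by linear_combination h t
  exact ⟨by linear_combination h₃, by linear_combination h₂, by linear_combination h₁,
    by linear_combination h₀⟩

end CoefficientComparison

section Hurwitz

variable {R : Type*} [CommRing R]

def quarticHurwitzDet₃ (a₄ a₃ a₂ a₁ a₀ : R) : R :=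
  a₁ * a₂ * a₃ - a₀ * a₃ ^ 2 - a₁ ^ 2 * a₄

theorem quarticHurwitzDet₃_of_roots (l₁ l₂ a b : R) :
    quarticHurwitzDet₃ 1 (-(l₁ + l₂) - 2 * a) (l₁ * l₂ + 2 * a * (l₁ + l₂) + a ^ 2 + b ^ 2)
        (-(l₁ + l₂) * (a ^ 2 + b ^ 2) - 2 * a * l₁ * l₂) (l₁ * l₂ * (a ^ 2 + b ^ 2))
      = 2 * a * ((l₁ + a) ^ 2 + b ^ 2) * (l₁ + l₂) * ((l₂ + a) ^ 2 + b ^ 2) := by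
  unfold quarticHurwitzDet₃
  ring

end Hurwitz

/-- For the monic real quartic with roots `λ₁`, `λ₂`, `a + ib`, `a - ib`
(written `λ⁴ + a₃λ³ + a₂λ² + a₁λ + a₀`, i.e. `a₄ = 1`), the third Routh–Hurwitz
determinant satisfies
`D₃ = a₁a₂a₃ - a₀a₃² - a₁²a₄ = 2a((λ₁ + a)² + b²)(λ₁ + λ₂)((λ₂ + a)² + b²)`;
in particular, if `b ≠ 0` and `λ₁ + λ₂ ≠ 0`, then `D₃ = 0` iff `a = 0`. -/
theorem routh_hurwitz_quartic (l₁ l₂ a b a₃ a₂ a₁ a₀ : ℝ)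
    (h : ∀ t : ℝ, t ^ 4 + a₃ * t ^ 3 + a₂ * t ^ 2 + a₁ * t + a₀
        = (t - l₁) * (t - l₂) * ((t - a) ^ 2 + b ^ 2)) :
    a₁ * a₂ * a₃ - a₀ * a₃ ^ 2 - a₁ ^ 2 * 1
      = 2 * a * ((l₁ + a) ^ 2 + b ^ 2) * (l₁ + l₂) * ((l₂ + a) ^ 2 + b ^ 2)
    ∧ (b ≠ 0 → l₁ + l₂ ≠ 0 →
        (a₁ * a₂ * a₃ - a₀ * a₃ ^ 2 - a₁ ^ 2 * 1 = 0 ↔ a = 0)) := by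
  obtain ⟨rfl, rfl, rfl, rfl⟩ := quartic_coeffs_of_roots h
  have hD₃ := quarticHurwitzDet₃_of_roots l₁ l₂ a b
  unfold quarticHurwitzDet₃ at hD₃
  refine ⟨hD₃, fun hb hs => ?_⟩
  have h₁ : (l₁ + a) ^ 2 + b ^ 2 ≠ 0 := by positivity
  have h₂ : (l₂ + a) ^ 2 + b ^ 2 ≠ 0 := by positivity
  rw [hD₃]
  simp [hs, h₁, h₂]
end
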